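/- Define F₁(n) = 2n and F_{i+1}(n) = F_i^{(n)}(1). Then for every n ≥ 1, F_{2n}(3) ≥ F_n(n). -/

import Mathlib

/-- The fast-growing family defining Ackermann: `F 1 n = 2n` and
`F (i+1) n = F i iterated n times on 1`. -/
def F : ℕ → ℕ → ℕ
  | 0, _ => 0
  | 1, n => 2 * n
  | i + 2, n => (F (i + 1))^[n] 1

/-!
Every level `F (i + 1)` at least doubles its argument, so `F (i + 2) m ≥ 2 ^ m`, and every level
is monotone. Hence one more iteration at level `i + 2` outweighs one more argument at level
`i + 1`: `F (i + 1) (m + 4) ≤ F (i + 1) (F (i + 2) (m + 2)) = F (i + 2) (m + 3)`. Trading the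
argument `k + 3` for `k` levels gives `F n (k + 3) ≤ F (n + k) 3`; take `k = n` and use
`F n n ≤ F n (n + 3)`.
-/

lemma two_pow_mul_le_iterate {f : ℕ → ℕ} (hf : ∀ x, 2 * x ≤ f x) (a m : ℕ) :
    2 ^ m * a ≤ f^[m] a := by
  induction m with
  | zero => simp
  | succ m ih =>
    rw [Function.iterate_succ_apply', pow_succ']
    calc 2 * 2 ^ m * a = 2 * (2 ^ m * a) := mul_assoc ..
      _ ≤ 2 * f^[m] a := Nat.mul_le_mul_left 2 ih
      _ ≤ f (f^[m] a) := hf _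

lemma F_add_two_succ (i m : ℕ) : F (i + 2) (m + 1) = F (i + 1) (F (i + 2) m) :=
  Function.iterate_succ_apply' ..

lemma two_mul_le_F (i m : ℕ) : 2 * m ≤ F (i + 1) m := by
  induction i generalizing m with
  | zero => exact le_rfl
  | succ i ih =>
    calc 2 * m ≤ 2 ^ m * 1 := by
          cases m with
          | zero => simp
          | succ m => simpa [pow_succ'] using Nat.lt_two_pow_self (n := m)
      _ ≤ F (i + 2) m := two_pow_mul_le_iterate ih 1 m

lemma two_pow_le_F (i m : ℕ) : 2 ^ m ≤ F (i + 2) m :=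
  (mul_one (2 ^ m)).symm.trans_le (two_pow_mul_le_iterate (two_mul_le_F i) 1 m)

lemma F_mono (i : ℕ) : Monotone (F (i + 1)) := by
  cases i with
  | zero => exact fun a b hab => Nat.mul_le_mul_left 2 hab
  | succ i =>
    have hid : id ≤ F (i + 1) := fun x =>
      (Nat.le_mul_of_pos_left x two_pos).trans (two_mul_le_F i x)
    exact fun a b hab => Function.monotone_iterate_of_id_le hid hab 1

lemma F_succ_add_four_le (i m : ℕ) : F (i + 1) (m + 4) ≤ F (i + 2) (m + 3) := by
  rw [F_add_two_succ]
  apply F_mono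
  calc m + 4 ≤ 2 ^ (m + 2) := by
        have := Nat.lt_two_pow_self (n := m)
        rw [pow_succ, pow_succ]
        omega
    _ ≤ F (i + 2) (m + 2) := two_pow_le_F i (m + 2)

lemma F_succ_add_three_le (i k : ℕ) : F (i + 1) (k + 3) ≤ F (i + 1 + k) 3 := by
  induction k generalizing i with
  | zero => exact le_rfl
  | succ k ih =>
    calc F (i + 1) (k + 1 + 3) ≤ F (i + 2) (k + 3) := F_succ_add_four_le i k
      _ ≤ F (i + 1 + 1 + k) 3 := ih (i + 1)
      _ = F (i + 1 + (k + 1)) 3 := by ring_nf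

theorem F_two_n_three_general (n : ℕ) : F n n ≤ F (2 * n) 3 := by
  cases n with
  | zero => exact le_rfl
  | succ j =>
    calc F (j + 1) (j + 1) ≤ F (j + 1) (j + 1 + 3) := F_mono j (by omega)
      _ ≤ F (j + 1 + (j + 1)) 3 := F_succ_add_three_le j (j + 1)
      _ = F (2 * (j + 1)) 3 := by ring_nf

/-- For every `n ≥ 1`, `F (2n) 3 ≥ F n n` (dominates the diagonal Ackermann). -/
theorem F_two_n_three (n : ℕ) (hn : 1 ≤ n) : F n n ≤ F (2 * n) 3 :=
  F_two_n_three_general n
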